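/- For every integer k ≥ 1, there exists a finite connected simple graph G of chordality exactly 4k (every induced cycle of G has length at most 4k, and G contains an induced cycle of length 4k) whose slimness equals k + 1. In particular, the bound sl(G) ≤ ⌊k/4⌋ + 1 for k-chordal graphs is sharp. -/

import Mathlib

open SimpleGraph

/-- A walk is a geodesic (shortest path) if its length equals the distance
between its endpoints. -/
def IsGeodesic {V : Type} (G : SimpleGraph V) {x y : V} (p : G.Walk x y) : Prop :=
  p.length = G.dist x y

/-- `G` is `δ`-slim: in every geodesic triangle, every vertex on one side is within
distance `δ` (in `G`) from the union of the other two sides. -/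
def IsSlim {V : Type} (G : SimpleGraph V) (δ : ℕ) : Prop :=
  ∀ (x y z : V) (pxy : G.Walk x y) (pxz : G.Walk x z) (pyz : G.Walk y z),
    IsGeodesic G pxy → IsGeodesic G pxz → IsGeodesic G pyz →
    ∀ u ∈ pxy.support, ∃ v, (v ∈ pxz.support ∨ v ∈ pyz.support) ∧ G.dist u v ≤ δ

/-- The slimness `sl(G)`: the smallest `δ` such that `G` is `δ`-slim. -/
noncomputable def slimness {V : Type} (G : SimpleGraph V) : ℕ :=
  sInf {δ : ℕ | IsSlim G δ}

/-- A cycle of `G` is induced (chordless) if any edge of `G` joining two vertices of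
the cycle is an edge of the cycle. -/
def IsInducedCycle {V : Type} (G : SimpleGraph V) {v : V} (p : G.Walk v v) : Prop :=
  p.IsCycle ∧ ∀ a b : V, a ∈ p.support → b ∈ p.support → G.Adj a b → s(a, b) ∈ p.edges

/-- `G` is `k`-chordal: every induced cycle of `G` has length at most `k`. -/
def KChordal {V : Type} (G : SimpleGraph V) (k : ℕ) : Prop :=
  ∀ (v : V) (p : G.Walk v v), IsInducedCycle G p → p.length ≤ k

/-!
The extremal graph is the cycle `0, 1, …, 4k+3` with the chords `{1, 4k+2}`, `{1, 4k+3}`,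
`{2k+1, 2k+3}`, `{2k+1, 2k+4}`. Its diameter is `2k+2`, which forces `(k+1)`-slimness. The
antipodal vertices `0` and `2k+2` are joined by two geodesics running around the two halves of
the long cycle, and the midpoint `k+1` of one of them is at distance `k+1` from the other one;
both distance lower bounds come from functions that change by at most one along edges.

The chords attach two ears to the long cycle, with tips `0`, `2k+2` and bases `4k+3`, `2k+3`.
The neighbours of a tip are adjacent, and so are the neighbours of a base other than its tip,
so an induced cycle longer than a triangle avoids first the tips and then the bases; the
remaining `4k` vertices form the induced cycle `1, …, 2k+1, 2k+4, …, 4k+2`.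
-/

variable {V : Type} {G : SimpleGraph V}

theorem IsSlim.mono {δ δ' : ℕ} (h : IsSlim G δ) (hδ : δ ≤ δ') : IsSlim G δ' := by
  intro x y z pxy pxz pyz hxy hxz hyz u hu
  obtain ⟨v, hv, hd⟩ := h x y z pxy pxz pyz hxy hxz hyz u hu
  exact ⟨v, hv, hd.trans hδ⟩

theorem slimness_eq_succ {δ : ℕ} (h : IsSlim G (δ + 1)) (h' : ¬IsSlim G δ) :
    slimness G = δ + 1 :=
  (Nat.sInf_upward_closed_eq_succ_iff (fun _ _ hle hs => IsSlim.mono hs hle) δ).2 ⟨h, h'⟩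

theorem isSlim_of_forall_dist_le {δ : ℕ} (h : ∀ a b, G.dist a b ≤ 2 * δ) : IsSlim G δ := by
  classical
  intro x y z pxy pxz pyz hxy _ _ u hu
  have hxu : G.dist x u ≤ (pxy.takeUntil u hu).length := dist_le _
  have huy : G.dist u y ≤ (pxy.dropUntil u hu).length := dist_le _
  have hsplit : (pxy.takeUntil u hu).length + (pxy.dropUntil u hu).length = G.dist x y := by
    rw [← Walk.length_append, pxy.take_spec hu]
    exact hxy
  by_cases hclose : G.dist x u ≤ δ
  · exact ⟨x, Or.inl pxz.start_mem_support, by rwa [dist_comm]⟩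
  · exact ⟨y, Or.inr pyz.start_mem_support, by have := h x y; omega⟩

namespace SimpleGraph

theorem Walk.apply_le_apply_add_length (f : V → ℕ) (hf : ∀ a b, G.Adj a b → f b ≤ f a + 1)
    {x y : V} (p : G.Walk x y) : f y ≤ f x + p.length := by
  induction p with
  | nil => simp
  | cons h _ ih =>
    have := hf _ _ h
    rw [Walk.length_cons]
    omega

theorem Reachable.apply_le_apply_add_dist (f : V → ℕ) (hf : ∀ a b, G.Adj a b → f b ≤ f a + 1)
    {x y : V} (hr : G.Reachable x y) : f y ≤ f x + G.dist x y := by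
  obtain ⟨p, hp⟩ := hr.exists_walk_length_eq_dist
  exact hp ▸ p.apply_le_apply_add_length f hf

namespace Walk

variable {u v w a b c : V}

theorem IsCycle.exists_ne_mem_edges {p : G.Walk v v} (hp : p.IsCycle) (hw : w ∈ p.support) :
    ∃ a b, a ≠ b ∧ s(w, a) ∈ p.edges ∧ s(w, b) ∈ p.edges := by
  classical
  obtain ⟨a, b, hab, hset⟩ := Set.ncard_eq_two.mp (hp.ncard_neighborSet_toSubgraph_eq_two hw)
  have ha : a ∈ p.toSubgraph.neighborSet w := hset ▸ Set.mem_insert _ _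
  have hb : b ∈ p.toSubgraph.neighborSet w := hset ▸ Set.mem_insert_of_mem _ rfl
  exact ⟨a, b, hab, adj_toSubgraph_iff_mem_edges.mp ha, adj_toSubgraph_iff_mem_edges.mp hb⟩

theorem edges_eq_cons_tail {p : G.Walk u v} (hp : ¬p.Nil) :
    p.edges = s(u, p.snd) :: p.tail.edges := by
  conv_lhs => rw [← p.cons_tail_eq hp]
  rfl

theorem IsCycle.length_eq_three_of_snd {q : G.Walk a a} (hq : q.IsCycle)
    (hbc : s(q.snd, c) ∈ q.edges) (hca : s(c, a) ∈ q.edges) : q.length = 3 := by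
  have hnil := hq.not_nil
  have hab : a ≠ q.snd := (q.adj_snd hnil).ne
  have hca_ne : c ≠ a := (q.adj_of_mem_edges hca).ne
  have hbc_ne : q.snd ≠ c := (q.adj_of_mem_edges hbc).ne
  rw [edges_eq_cons_tail hnil] at hbc hca
  have htail : q.tail.IsPath := hq.isPath_tail
  have hbc' : s(q.snd, c) ∈ q.tail.edges :=
    (List.mem_cons.mp hbc).resolve_left fun h => by grind [Sym2.eq_iff]
  obtain rfl : c = q.tail.snd := htail.eq_snd_of_mem_edges hbc'
  have htnil : ¬q.tail.Nil := edges_eq_nil.not.mp (List.ne_nil_of_mem hbc')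
  have hca' : s(q.tail.snd, a) ∈ q.tail.tail.edges := by
    rw [edges_eq_cons_tail htnil] at hca
    grind [Sym2.eq_iff]
  have := htail.tail.length_eq_one_of_mem_edges hca'
  have := q.length_tail_add_one hnil
  have := q.tail.length_tail_add_one htnil
  omega

theorem IsCycle.length_eq_three_of_mem_edges {p : G.Walk v v} (hp : p.IsCycle)
    (hab : s(a, b) ∈ p.edges) (hbc : s(b, c) ∈ p.edges) (hca : s(c, a) ∈ p.edges) :
    p.length = 3 := by
  classical
  have ha : a ∈ p.support := p.fst_mem_support_of_mem_edges hab
  set q := p.rotate a ha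
  have hq : q.IsCycle := hp.rotate ha
  have hmem (e : Sym2 V) : e ∈ q.edges ↔ e ∈ p.edges := (p.rotate_edges a ha).mem_iff
  rw [← p.length_rotate a ha]
  have hnb : b ∈ q.toSubgraph.neighborSet a :=
    adj_toSubgraph_iff_mem_edges.mpr ((hmem _).mpr hab)
  have hnc : c ∈ q.toSubgraph.neighborSet a :=
    adj_toSubgraph_iff_mem_edges.mpr (Sym2.eq_swap ▸ (hmem _).mpr hca)
  rw [hq.neighborSet_toSubgraph_endpoint] at hnb hnc
  have hbc_ne : b ≠ c := (p.adj_of_mem_edges hbc).ne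
  obtain hb | hc : q.snd = b ∨ q.snd = c := by
    simp only [Set.mem_insert_iff, Set.mem_singleton_iff] at hnb hnc
    grind
  · subst hb
    exact hq.length_eq_three_of_snd ((hmem _).mpr hbc) ((hmem _).mpr hca)
  · subst hc
    exact hq.length_eq_three_of_snd (Sym2.eq_swap ▸ (hmem _).mpr hbc)
      (Sym2.eq_swap ▸ (hmem _).mpr hab)

theorem IsPath.isCycle_cons {q : G.Walk u v} (hq : q.IsPath) (h : G.Adj v u)
    (hlen : q.length ≠ 1) : (cons h q).IsCycle :=
  (cons_isCycle_iff q h).mpr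
    ⟨hq, fun he => hlen (hq.length_eq_one_of_mem_edges (Sym2.eq_swap ▸ he))⟩

theorem IsCycle.length_add_card_le [Fintype V] [DecidableEq V] {p : G.Walk v v}
    (hp : p.IsCycle) {s : Finset V} (hs : ∀ x ∈ s, x ∉ p.support) :
    p.length + s.card ≤ Fintype.card V := by
  have hsub : p.support.tail.toFinset ⊆ sᶜ := fun x hx =>
    Finset.mem_compl.mpr fun hxs => hs x hxs (List.mem_of_mem_tail (List.mem_toFinset.mp hx))
  have := Finset.card_le_card hsub
  rw [List.toFinset_card_of_nodup hp.support_nodup, Finset.card_compl, List.length_tail,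
    length_support] at this
  have := s.card_le_univ
  omega

end Walk

section AscendingWalk

variable {n : ℕ}

def ascWalk {G : SimpleGraph (Fin n)} (hG : ∀ i j : Fin n, j.val = i.val + 1 → G.Adj i j) :
    (d : ℕ) → (a b : Fin n) → b.val = a.val + d → G.Walk a b
  | 0, a, b, h => Walk.nil.copy rfl (Fin.ext h.symm)
  | d + 1, a, b, h =>
    .cons (hG a ⟨a.val + 1, by omega⟩ rfl)
      (ascWalk hG d ⟨a.val + 1, by omega⟩ b (by simp only; omega))

variable {G : SimpleGraph (Fin n)} (hG : ∀ i j : Fin n, j.val = i.val + 1 → G.Adj i j)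

@[simp]
theorem length_ascWalk (d : ℕ) (a b : Fin n) (h : b.val = a.val + d) :
    (ascWalk hG d a b h).length = d := by
  induction d generalizing a with
  | zero => obtain rfl : a = b := Fin.ext (by omega); rfl
  | succ d ih => simp [ascWalk, ih]

theorem map_val_support_ascWalk (d : ℕ) (a b : Fin n) (h : b.val = a.val + d) :
    (ascWalk hG d a b h).support.map Fin.val = List.range' a.val (d + 1) := by
  induction d generalizing a with
  | zero => obtain rfl : a = b := Fin.ext (by omega); simp [ascWalk]
  | succ d ih =>
    rw [List.range'_succ]
    simpa [ascWalk] using ih ⟨a.val + 1, by omega⟩ (by simp only; omega)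

theorem mem_support_ascWalk {d : ℕ} {a b x : Fin n} {h : b.val = a.val + d} :
    x ∈ (ascWalk hG d a b h).support ↔ a.val ≤ x.val ∧ x.val ≤ b.val := by
  rw [← List.mem_map_of_injective Fin.val_injective, map_val_support_ascWalk, List.mem_range'_1]
  omega

theorem mk_mem_edges_ascWalk {d : ℕ} {a b x y : Fin n} {h : b.val = a.val + d}
    (hx : a.val ≤ x.val) (hy : y.val = x.val + 1) (hyb : y.val ≤ b.val) :
    s(x, y) ∈ (ascWalk hG d a b h).edges := by
  induction d generalizing a with
  | zero => omega
  | succ d ih =>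
    rw [ascWalk, Walk.edges_cons, List.mem_cons]
    rcases hx.eq_or_lt with hax | hlt
    · obtain rfl : a = x := Fin.ext hax
      exact .inl (by rw [show y = ⟨a.val + 1, by omega⟩ from Fin.ext hy])
    · exact .inr (ih (a := ⟨a.val + 1, by omega⟩) (by simp only; omega))

end AscendingWalk

end SimpleGraph

theorem IsInducedCycle.notMem_support {v w : V} {p : G.Walk v v} (hp : IsInducedCycle G p)
    (h3 : p.length ≠ 3)
    (hw : ∀ a b, a ∈ p.support → b ∈ p.support → G.Adj w a → G.Adj w b → a ≠ b →
      G.Adj a b) :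
    w ∉ p.support := by
  intro hwp
  obtain ⟨a, b, hab, ha, hb⟩ := hp.1.exists_ne_mem_edges hwp
  have has := p.snd_mem_support_of_mem_edges ha
  have hbs := p.snd_mem_support_of_mem_edges hb
  have hab' := hp.2 a b has hbs (hw a b has hbs (p.adj_of_mem_edges ha) (p.adj_of_mem_edges hb) hab)
  exact h3 (hp.1.length_eq_three_of_mem_edges ha hab' (Sym2.eq_swap ▸ hb))

namespace SharpSlimness

def sharpAdj (k i j : ℕ) : Prop :=
  j = i + 1 ∨ (i = 0 ∧ j = 4 * k + 3) ∨ (i = 1 ∧ (j = 4 * k + 2 ∨ j = 4 * k + 3)) ∨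
    (i = 2 * k + 1 ∧ (j = 2 * k + 3 ∨ j = 2 * k + 4))

def sharpGraph (k : ℕ) : SimpleGraph (Fin (4 * k + 4)) :=
  SimpleGraph.fromRel fun a b => sharpAdj k a b

variable {k : ℕ}

theorem sharpGraph_adj {a b : Fin (4 * k + 4)} :
    (sharpGraph k).Adj a b ↔ a.val ≠ b.val ∧ (sharpAdj k a b ∨ sharpAdj k b a) := by
  simp [sharpGraph, Fin.val_ne_iff]

theorem sharpGraph_adj_of_val_eq_succ (a b : Fin (4 * k + 4)) (h : b.val = a.val + 1) :
    (sharpGraph k).Adj a b :=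
  sharpGraph_adj.mpr ⟨by omega, Or.inl (Or.inl h)⟩

theorem sharpGraph_connected : (sharpGraph k).Connected := by
  have h0 (a : Fin (4 * k + 4)) : (sharpGraph k).Reachable ⟨0, by omega⟩ a :=
    ⟨ascWalk sharpGraph_adj_of_val_eq_succ a.val _ a (by simp)⟩
  exact ⟨fun a b => (h0 a).symm.trans (h0 b)⟩

theorem sharpGraph_dist_le (a b : Fin (4 * k + 4)) : (sharpGraph k).dist a b ≤ 2 * k + 2 := by
  wlog hab : a.val ≤ b.val generalizing a b
  · rw [dist_comm]
    exact this b a (by omega)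
  by_cases hd : b.val ≤ a.val + (2 * k + 2)
  · calc (sharpGraph k).dist a b
        ≤ (ascWalk sharpGraph_adj_of_val_eq_succ (b.val - a.val) a b (by omega)).length :=
          dist_le _
      _ ≤ 2 * k + 2 := by simp only [length_ascWalk]; omega
  · obtain ⟨x, hx⟩ : ∃ x : Fin (4 * k + 4), x.val = 0 := ⟨⟨0, by omega⟩, rfl⟩
    obtain ⟨z, hz⟩ : ∃ z : Fin (4 * k + 4), z.val = 4 * k + 3 := ⟨⟨4 * k + 3, by omega⟩, rfl⟩
    have hxz : (sharpGraph k).Adj x z := sharpGraph_adj.mpr (by unfold sharpAdj; omega)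
    calc (sharpGraph k).dist a b
        ≤ ((ascWalk sharpGraph_adj_of_val_eq_succ a.val x a (by omega)).reverse.append
            (.cons hxz (ascWalk sharpGraph_adj_of_val_eq_succ (4 * k + 3 - b.val) b z
              (by omega)).reverse)).length := dist_le _
      _ ≤ 2 * k + 2 := by
        simp only [Walk.length_append, Walk.length_reverse, Walk.length_cons, length_ascWalk]
        omega

theorem sharpGraph_isSlim : IsSlim (sharpGraph k) (k + 1) :=
  isSlim_of_forall_dist_le fun a b => (sharpGraph_dist_le a b).trans (by omega)

theorem sharpGraph_not_isSlim : ¬IsSlim (sharpGraph k) k := by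
  obtain ⟨x, hx⟩ : ∃ x : Fin (4 * k + 4), x.val = 0 := ⟨⟨0, by omega⟩, rfl⟩
  obtain ⟨y, hy⟩ : ∃ y : Fin (4 * k + 4), y.val = 2 * k + 2 := ⟨⟨2 * k + 2, by omega⟩, rfl⟩
  obtain ⟨z, hz⟩ : ∃ z : Fin (4 * k + 4), z.val = 4 * k + 3 := ⟨⟨4 * k + 3, by omega⟩, rfl⟩
  obtain ⟨u, hu⟩ : ∃ u : Fin (4 * k + 4), u.val = k + 1 := ⟨⟨k + 1, by omega⟩, rfl⟩
  have hdist : (sharpGraph k).dist x y = 2 * k + 2 := by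
    refine le_antisymm (sharpGraph_dist_le x y) ?_
    -- the distance from `0` along the outer cycle; no chord shortens it
    have := sharpGraph_connected.preconnected x y |>.apply_le_apply_add_dist
      (fun i => min i.val (4 * k + 4 - i.val))
      (fun a b h => by rw [sharpGraph_adj] at h; unfold sharpAdj at h; omega)
    omega
  let pxy := ascWalk sharpGraph_adj_of_val_eq_succ (2 * k + 2) x y (by omega)
  have hzx : (sharpGraph k).Adj z x := sharpGraph_adj.mpr (by unfold sharpAdj; omega)
  let pyx := (ascWalk sharpGraph_adj_of_val_eq_succ (2 * k + 1) y z (by omega)).concat hzx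
  intro hs
  obtain ⟨v, hv, hd⟩ := hs x y x pxy .nil pyx
    (by simp [IsGeodesic, pxy, hdist]) (by simp [IsGeodesic])
    (by simp [IsGeodesic, pyx, SimpleGraph.dist_comm, hdist])
    u ((mem_support_ascWalk _).mpr (by omega))
  have hv : v.val = 0 ∨ 2 * k + 2 ≤ v.val := by
    simp only [pyx, Walk.support_nil, Walk.support_concat, List.mem_cons, List.mem_append,
      List.not_mem_nil, or_false, mem_support_ascWalk] at hv
    omega
  -- vanishes at `u` and equals `k + 1` on both other sides of the triangle
  have := sharpGraph_connected.preconnected u v |>.apply_le_apply_add_dist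
    (fun i => min (i.val - (k + 1) + (k + 1 - i.val)) (k + 1))
    (fun a b h => by rw [sharpGraph_adj] at h; unfold sharpAdj at h; omega)
  omega

theorem slimness_sharpGraph : slimness (sharpGraph k) = k + 1 :=
  slimness_eq_succ sharpGraph_isSlim sharpGraph_not_isSlim


theorem sharpGraph_adj_of_adj_tip {w a b : Fin (4 * k + 4)} (hw : w.val = 0 ∨ w.val = 2 * k + 2)
    (ha : (sharpGraph k).Adj w a) (hb : (sharpGraph k).Adj w b) (hab : a ≠ b) :
    (sharpGraph k).Adj a b := by
  have hab := Fin.val_ne_of_ne hab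
  rw [sharpGraph_adj] at ha hb
  unfold sharpAdj at ha hb
  -- clearing keeps `omega` from case-splitting on both adjacency disjunctions at once
  rcases hw with hw | hw
  · have h1 : a.val = 1 ∨ a.val = 4 * k + 3 := by clear hb; omega
    have h2 : b.val = 1 ∨ b.val = 4 * k + 3 := by clear ha; omega
    clear ha hb
    rcases h1 with h1 | h1 <;> rcases h2 with h2 | h2 <;>
      first | omega | exact sharpGraph_adj.mpr (by unfold sharpAdj; omega)
  · have h1 : a.val = 2 * k + 1 ∨ a.val = 2 * k + 3 := by clear hb; omega
    have h2 : b.val = 2 * k + 1 ∨ b.val = 2 * k + 3 := by clear ha; omega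
    clear ha hb
    rcases h1 with h1 | h1 <;> rcases h2 with h2 | h2 <;>
      first | omega | exact sharpGraph_adj.mpr (by unfold sharpAdj; omega)

theorem sharpGraph_adj_of_adj_base {w a b : Fin (4 * k + 4)}
    (hw : w.val = 4 * k + 3 ∨ w.val = 2 * k + 3)
    (ha : (sharpGraph k).Adj w a) (hb : (sharpGraph k).Adj w b) (hab : a ≠ b)
    (ha' : a.val ≠ 0 ∧ a.val ≠ 2 * k + 2) (hb' : b.val ≠ 0 ∧ b.val ≠ 2 * k + 2) :
    (sharpGraph k).Adj a b := by
  have hab := Fin.val_ne_of_ne hab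
  rw [sharpGraph_adj] at ha hb
  unfold sharpAdj at ha hb
  rcases hw with hw | hw
  · have h1 : a.val = 1 ∨ a.val = 4 * k + 2 := by clear hb; omega
    have h2 : b.val = 1 ∨ b.val = 4 * k + 2 := by clear ha; omega
    clear ha hb
    rcases h1 with h1 | h1 <;> rcases h2 with h2 | h2 <;>
      first | omega | exact sharpGraph_adj.mpr (by unfold sharpAdj; omega)
  · have h1 : a.val = 2 * k + 1 ∨ a.val = 2 * k + 4 := by clear hb; omega
    have h2 : b.val = 2 * k + 1 ∨ b.val = 2 * k + 4 := by clear ha; omega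
    clear ha hb
    rcases h1 with h1 | h1 <;> rcases h2 with h2 | h2 <;>
      first | omega | exact sharpGraph_adj.mpr (by unfold sharpAdj; omega)

theorem sharpGraph_kChordal (hk : 1 ≤ k) : KChordal (sharpGraph k) (4 * k) := by
  intro v p hp
  by_cases h3 : p.length = 3
  · omega
  obtain ⟨x, hx⟩ : ∃ x : Fin (4 * k + 4), x.val = 0 := ⟨⟨0, by omega⟩, rfl⟩
  obtain ⟨y, hy⟩ : ∃ y : Fin (4 * k + 4), y.val = 2 * k + 2 := ⟨⟨2 * k + 2, by omega⟩, rfl⟩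
  obtain ⟨y', hy'⟩ : ∃ y' : Fin (4 * k + 4), y'.val = 2 * k + 3 := ⟨⟨2 * k + 3, by omega⟩, rfl⟩
  obtain ⟨z, hz⟩ : ∃ z : Fin (4 * k + 4), z.val = 4 * k + 3 := ⟨⟨4 * k + 3, by omega⟩, rfl⟩
  have hxp : x ∉ p.support := hp.notMem_support h3 fun a b _ _ ha hb hab =>
    sharpGraph_adj_of_adj_tip (.inl hx) ha hb hab
  have hyp : y ∉ p.support := hp.notMem_support h3 fun a b _ _ ha hb hab =>
    sharpGraph_adj_of_adj_tip (.inr hy) ha hb hab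
  have hval {c : Fin (4 * k + 4)} (hc : c ∈ p.support) : c.val ≠ 0 ∧ c.val ≠ 2 * k + 2 :=
    ⟨fun h => hxp (Fin.ext (h.trans hx.symm) ▸ hc),
      fun h => hyp (Fin.ext (h.trans hy.symm) ▸ hc)⟩
  have hzp : z ∉ p.support := hp.notMem_support h3 fun a b ha' hb' ha hb hab =>
    sharpGraph_adj_of_adj_base (.inl hz) ha hb hab (hval ha') (hval hb')
  have hy'p : y' ∉ p.support := hp.notMem_support h3 fun a b ha' hb' ha hb hab =>
    sharpGraph_adj_of_adj_base (.inr hy') ha hb hab (hval ha') (hval hb')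
  have hcard : ({x, y, y', z} : Finset (Fin (4 * k + 4))).card = 4 := by
    rw [Finset.card_insert_of_notMem, Finset.card_insert_of_notMem, Finset.card_pair] <;>
      simp only [Finset.mem_insert, Finset.mem_singleton, ne_eq, Fin.ext_iff] <;> omega
  have := hp.1.length_add_card_le (s := {x, y, y', z}) (by
    simp only [Finset.mem_insert, Finset.mem_singleton]
    rintro _ (rfl | rfl | rfl | rfl) <;> assumption)
  rw [hcard, Fintype.card_fin] at this
  omega

def sharpPath (hk : 1 ≤ k) : (sharpGraph k).Walk ⟨1, by omega⟩ ⟨4 * k + 2, by omega⟩ :=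
  (ascWalk sharpGraph_adj_of_val_eq_succ (2 * k) _ ⟨2 * k + 1, by omega⟩
      (Nat.add_comm _ _)).append
    (.cons (sharpGraph_adj.mpr
        ⟨by simp only; omega, .inl (.inr (.inr (.inr ⟨rfl, .inr rfl⟩)))⟩)
      (ascWalk sharpGraph_adj_of_val_eq_succ (2 * k - 2) ⟨2 * k + 4, by omega⟩ _
        (show 4 * k + 2 = 2 * k + 4 + (2 * k - 2) by omega)))

theorem map_val_support_sharpPath (hk : 1 ≤ k) :
    (sharpPath hk).support.map Fin.val =
      List.range' 1 (2 * k + 1) ++ List.range' (2 * k + 4) (2 * k - 1) := by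
  simp only [sharpPath, Walk.support_append, Walk.support_cons, List.tail_cons, List.map_append,
    map_val_support_ascWalk]
  congr 2
  omega

theorem mem_support_sharpPath (hk : 1 ≤ k) {x : Fin (4 * k + 4)} :
    x ∈ (sharpPath hk).support ↔
      (1 ≤ x.val ∧ x.val ≤ 2 * k + 1) ∨ (2 * k + 4 ≤ x.val ∧ x.val ≤ 4 * k + 2) := by
  rw [← List.mem_map_of_injective Fin.val_injective, map_val_support_sharpPath, List.mem_append,
    List.mem_range'_1, List.mem_range'_1]
  omega

theorem isPath_sharpPath (hk : 1 ≤ k) : (sharpPath hk).IsPath := by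
  rw [Walk.isPath_def]
  refine List.Nodup.of_map Fin.val ?_
  rw [map_val_support_sharpPath]
  refine List.nodup_append.mpr ⟨List.nodup_range', List.nodup_range', fun x hx y hy => ?_⟩
  rw [List.mem_range'_1] at hx hy
  omega

theorem length_sharpPath (hk : 1 ≤ k) : (sharpPath hk).length = 4 * k - 1 := by
  simp only [sharpPath, Walk.length_append, Walk.length_cons, length_ascWalk]
  omega

theorem mk_mem_edges_sharpPath (hk : 1 ≤ k) {x y : Fin (4 * k + 4)}
    (hx : x ∈ (sharpPath hk).support) (hy : y ∈ (sharpPath hk).support) (hlt : x.val < y.val)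
    (hxy : (sharpGraph k).Adj x y) (hchord : ¬(x.val = 1 ∧ y.val = 4 * k + 2)) :
    s(x, y) ∈ (sharpPath hk).edges := by
  rw [mem_support_sharpPath] at hx hy
  rw [sharpGraph_adj] at hxy
  unfold sharpAdj at hxy
  rw [sharpPath, Walk.edges_append, Walk.edges_cons, List.mem_append, List.mem_cons]
  rcases (by omega : (y.val = x.val + 1 ∧ y.val ≤ 2 * k + 1) ∨
      (y.val = x.val + 1 ∧ 2 * k + 4 ≤ x.val) ∨ (x.val = 2 * k + 1 ∧ y.val = 2 * k + 4))
    with h | h | h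
  · exact .inl (mk_mem_edges_ascWalk _ (by simp only; omega) h.1 (by simp only; omega))
  · exact .inr (.inr (mk_mem_edges_ascWalk _ (by simp only; omega) h.1 (by simp only; omega)))
  · rw [show x = ⟨2 * k + 1, by omega⟩ from Fin.ext h.1,
      show y = ⟨2 * k + 4, by omega⟩ from Fin.ext h.2]
    exact .inr (.inl rfl)

def sharpCycle (hk : 1 ≤ k) :
    (sharpGraph k).Walk ⟨4 * k + 2, by omega⟩ ⟨4 * k + 2, by omega⟩ :=
  .cons (sharpGraph_adj.mpr
      ⟨by simp only; omega, .inr (.inr (.inr (.inl ⟨rfl, .inl rfl⟩)))⟩)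
    (sharpPath hk)

theorem length_sharpCycle (hk : 1 ≤ k) : (sharpCycle hk).length = 4 * k := by
  rw [sharpCycle, Walk.length_cons, length_sharpPath]
  omega

theorem isInducedCycle_sharpCycle (hk : 1 ≤ k) :
    IsInducedCycle (sharpGraph k) (sharpCycle hk) := by
  refine ⟨(isPath_sharpPath hk).isCycle_cons _ (by rw [length_sharpPath]; omega), ?_⟩
  intro x y hx hy hxy
  wlog hlt : x.val < y.val generalizing x y
  · rw [Sym2.eq_swap]
    exact this y x hy hx hxy.symm (by have := Fin.val_ne_of_ne hxy.ne; omega)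
  have hpath {z : Fin (4 * k + 4)} (hz : z ∈ (sharpCycle hk).support) :
      z ∈ (sharpPath hk).support := by
    rw [sharpCycle, Walk.support_cons, List.mem_cons] at hz
    exact hz.elim (fun h => h ▸ (sharpPath hk).end_mem_support) id
  rw [sharpCycle, Walk.edges_cons, List.mem_cons]
  by_cases hchord : x.val = 1 ∧ y.val = 4 * k + 2
  · rw [show x = ⟨1, by omega⟩ from Fin.ext hchord.1,
      show y = ⟨4 * k + 2, by omega⟩ from Fin.ext hchord.2, Sym2.eq_swap]
    exact .inl rfl
  · exact .inr (mk_mem_edges_sharpPath hk (hpath hx) (hpath hy) hlt hxy hchord)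

end SharpSlimness

/-- For every `k ≥ 1` there is a finite connected graph of chordality exactly `4k`
(every induced cycle has length at most `4k`, and some induced cycle has length `4k`)
whose slimness equals `k + 1`; hence the bound `sl(G) ≤ ⌊k/4⌋ + 1` for `k`-chordal
graphs is sharp. -/
theorem exists_graph_slimness_chordality_sharp (k : ℕ) (hk : 1 ≤ k) :
    ∃ (V : Type) (_ : Fintype V) (G : SimpleGraph V),
      G.Connected ∧ KChordal G (4 * k) ∧
      (∃ (v : V) (p : G.Walk v v), IsInducedCycle G p ∧ p.length = 4 * k) ∧
      slimness G = k + 1 :=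
  ⟨Fin (4 * k + 4), inferInstance, SharpSlimness.sharpGraph k, SharpSlimness.sharpGraph_connected,
    SharpSlimness.sharpGraph_kChordal hk,
    ⟨_, SharpSlimness.sharpCycle hk, SharpSlimness.isInducedCycle_sharpCycle hk,
      SharpSlimness.length_sharpCycle hk⟩,
    SharpSlimness.slimness_sharpGraph⟩
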